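/- Let m be a positive integer, R a commutative ring which is an ℝ-algebra, and η = diag(1, −1, …, −1) ∈ Mₘ(ℝ) regarded in Mₘ(R). Let e ∈ Mₘ(R) be invertible, set g := eᵀηe, let ζ ∈ R^{1×m} be a row vector, and let z ∈ R be invertible. For a row vector r set r^t := η⁻¹rᵀ and k₁(r) := [[1, r, ½ r r^t],[0, 1ₘ, r^t],[0, 0, 1]] (blocks of sizes (1, m, 1)). Then blockdiag(1, e, 1)⁻¹ · k₁(ζ e⁻¹) · blockdiag(1, e, 1) · blockdiag(z, z·1ₘ, z⁻¹) equals the block matrix W̄ := [[z, zζ, ½ z⁻¹ ζ g⁻¹ ζᵀ],[0, z·1ₘ, z⁻¹ g⁻¹ ζᵀ],[0, 0, z⁻¹]]. (W̄ = u₀⁻¹ k₁ u₀ W W̃ is the matrix implementing the residual Weyl transformation on the fully dressed fields.) -/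

import Mathlib

open Matrix

/-- 3×3 block matrix with block sizes (1, m, 1). -/
def B3 {R : Type*} {m : ℕ}
    (a11 : Matrix (Fin 1) (Fin 1) R) (a12 : Matrix (Fin 1) (Fin m) R) (a13 : Matrix (Fin 1) (Fin 1) R)
    (a21 : Matrix (Fin m) (Fin 1) R) (a22 : Matrix (Fin m) (Fin m) R) (a23 : Matrix (Fin m) (Fin 1) R)
    (a31 : Matrix (Fin 1) (Fin 1) R) (a32 : Matrix (Fin 1) (Fin m) R) (a33 : Matrix (Fin 1) (Fin 1) R) :
    Matrix (Fin 1 ⊕ (Fin m ⊕ Fin 1)) (Fin 1 ⊕ (Fin m ⊕ Fin 1)) R :=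
  Matrix.fromBlocks a11 (Matrix.fromCols a12 a13) (Matrix.fromRows a21 a31)
    (Matrix.fromBlocks a22 a23 a32 a33)

/-- Block extractors for a 3×3 block matrix with block sizes (1, m, 1). -/
def blk11 {R : Type*} {m : ℕ} (M : Matrix (Fin 1 ⊕ (Fin m ⊕ Fin 1)) (Fin 1 ⊕ (Fin m ⊕ Fin 1)) R) :
    Matrix (Fin 1) (Fin 1) R := M.submatrix Sum.inl Sum.inl
def blk12 {R : Type*} {m : ℕ} (M : Matrix (Fin 1 ⊕ (Fin m ⊕ Fin 1)) (Fin 1 ⊕ (Fin m ⊕ Fin 1)) R) :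
    Matrix (Fin 1) (Fin m) R := M.submatrix Sum.inl (fun j => Sum.inr (Sum.inl j))
def blk13 {R : Type*} {m : ℕ} (M : Matrix (Fin 1 ⊕ (Fin m ⊕ Fin 1)) (Fin 1 ⊕ (Fin m ⊕ Fin 1)) R) :
    Matrix (Fin 1) (Fin 1) R := M.submatrix Sum.inl (fun j => Sum.inr (Sum.inr j))
def blk21 {R : Type*} {m : ℕ} (M : Matrix (Fin 1 ⊕ (Fin m ⊕ Fin 1)) (Fin 1 ⊕ (Fin m ⊕ Fin 1)) R) :
    Matrix (Fin m) (Fin 1) R := M.submatrix (fun i => Sum.inr (Sum.inl i)) Sum.inl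
def blk22 {R : Type*} {m : ℕ} (M : Matrix (Fin 1 ⊕ (Fin m ⊕ Fin 1)) (Fin 1 ⊕ (Fin m ⊕ Fin 1)) R) :
    Matrix (Fin m) (Fin m) R := M.submatrix (fun i => Sum.inr (Sum.inl i)) (fun j => Sum.inr (Sum.inl j))
def blk23 {R : Type*} {m : ℕ} (M : Matrix (Fin 1 ⊕ (Fin m ⊕ Fin 1)) (Fin 1 ⊕ (Fin m ⊕ Fin 1)) R) :
    Matrix (Fin m) (Fin 1) R := M.submatrix (fun i => Sum.inr (Sum.inl i)) (fun j => Sum.inr (Sum.inr j))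
def blk31 {R : Type*} {m : ℕ} (M : Matrix (Fin 1 ⊕ (Fin m ⊕ Fin 1)) (Fin 1 ⊕ (Fin m ⊕ Fin 1)) R) :
    Matrix (Fin 1) (Fin 1) R := M.submatrix (fun i => Sum.inr (Sum.inr i)) Sum.inl
def blk32 {R : Type*} {m : ℕ} (M : Matrix (Fin 1 ⊕ (Fin m ⊕ Fin 1)) (Fin 1 ⊕ (Fin m ⊕ Fin 1)) R) :
    Matrix (Fin 1) (Fin m) R := M.submatrix (fun i => Sum.inr (Sum.inr i)) (fun j => Sum.inr (Sum.inl j))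
def blk33 {R : Type*} {m : ℕ} (M : Matrix (Fin 1 ⊕ (Fin m ⊕ Fin 1)) (Fin 1 ⊕ (Fin m ⊕ Fin 1)) R) :
    Matrix (Fin 1) (Fin 1) R := M.submatrix (fun i => Sum.inr (Sum.inr i)) (fun j => Sum.inr (Sum.inr j))

/-- The Minkowski matrix `diag(1, −1, …, −1)` of signature `(1, m−1)`, regarded in `Mₘ(R)`. -/
def MinkR (m : ℕ) (R : Type*) [CommRing R] [Algebra ℝ R] : Matrix (Fin m) (Fin m) R :=
  (Matrix.diagonal fun i : Fin m => if (i : ℕ) = 0 then (1 : ℝ) else -1).map (algebraMap ℝ R)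

/-- For a row vector `q` over `R`, the column vector `q^t := η⁻¹ qᵀ`. -/
noncomputable def rTR {m : ℕ} {R : Type*} [CommRing R] [Algebra ℝ R]
    (q : Matrix (Fin 1) (Fin m) R) : Matrix (Fin m) (Fin 1) R :=
  (MinkR m R)⁻¹ * q.transpose

/-- The special conformal (inversion) group element
`k₁(q) = [[1, q, ½ q q^t],[0, 1ₘ, q^t],[0, 0, 1]]` over `R`. -/
noncomputable def k1R {m : ℕ} {R : Type*} [CommRing R] [Algebra ℝ R]
    (q : Matrix (Fin 1) (Fin m) R) :
    Matrix (Fin 1 ⊕ (Fin m ⊕ Fin 1)) (Fin 1 ⊕ (Fin m ⊕ Fin 1)) R :=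
  B3 1 q ((2⁻¹ : ℝ) • (q * rTR q)) 0 1 (rTR q) 0 0 1

namespace Matrix

variable {R : Type*}

theorem fromCols_add [Add R] {n n₁ n₂ : Type*} (A₁ B₁ : Matrix n n₁ R) (A₂ B₂ : Matrix n n₂ R) :
    fromCols A₁ A₂ + fromCols B₁ B₂ = fromCols (A₁ + B₁) (A₂ + B₂) := by
  ext i (j | j) <;> rfl

theorem fromRows_add [Add R] {n n₁ n₂ : Type*} (A₁ B₁ : Matrix n₁ n R) (A₂ B₂ : Matrix n₂ n R) :
    fromRows A₁ A₂ + fromRows B₁ B₂ = fromRows (A₁ + B₁) (A₂ + B₂) := by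
  ext (i | i) j <;> rfl

end Matrix

section BlockMatrix

variable {R : Type*} {m : ℕ}

theorem B3_mul [Semiring R]
    (a11 : Matrix (Fin 1) (Fin 1) R) (a12 : Matrix (Fin 1) (Fin m) R) (a13 : Matrix (Fin 1) (Fin 1) R)
    (a21 : Matrix (Fin m) (Fin 1) R) (a22 : Matrix (Fin m) (Fin m) R) (a23 : Matrix (Fin m) (Fin 1) R)
    (a31 : Matrix (Fin 1) (Fin 1) R) (a32 : Matrix (Fin 1) (Fin m) R) (a33 : Matrix (Fin 1) (Fin 1) R)
    (b11 : Matrix (Fin 1) (Fin 1) R) (b12 : Matrix (Fin 1) (Fin m) R) (b13 : Matrix (Fin 1) (Fin 1) R)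
    (b21 : Matrix (Fin m) (Fin 1) R) (b22 : Matrix (Fin m) (Fin m) R) (b23 : Matrix (Fin m) (Fin 1) R)
    (b31 : Matrix (Fin 1) (Fin 1) R) (b32 : Matrix (Fin 1) (Fin m) R) (b33 : Matrix (Fin 1) (Fin 1) R) :
    B3 a11 a12 a13 a21 a22 a23 a31 a32 a33 * B3 b11 b12 b13 b21 b22 b23 b31 b32 b33 =
      B3 (a11 * b11 + (a12 * b21 + a13 * b31)) (a11 * b12 + (a12 * b22 + a13 * b32))
        (a11 * b13 + (a12 * b23 + a13 * b33))
        (a21 * b11 + (a22 * b21 + a23 * b31)) (a21 * b12 + (a22 * b22 + a23 * b32))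
        (a21 * b13 + (a22 * b23 + a23 * b33))
        (a31 * b11 + (a32 * b21 + a33 * b31)) (a31 * b12 + (a32 * b22 + a33 * b32))
        (a31 * b13 + (a32 * b23 + a33 * b33)) := by
  unfold B3
  rw [fromBlocks_multiply, fromCols_mul_fromRows, fromRows_mul_fromCols,
    mul_fromCols, fromCols_mul_fromBlocks, fromCols_add,
    fromRows_mul, fromBlocks_mul_fromRows, fromRows_add,
    fromBlocks_multiply, fromBlocks_add]

theorem B3_one [Semiring R] :
    B3 1 0 0 0 (1 : Matrix (Fin m) (Fin m) R) 0 0 0 1 = 1 := by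
  unfold B3
  rw [fromCols_zero, fromRows_zero, fromBlocks_one, fromBlocks_one]

theorem inv_B3_blockDiagonal [CommRing R] (a : Matrix (Fin m) (Fin m) R) (ha : IsUnit a.det) :
    (B3 1 0 0 0 a 0 0 0 1)⁻¹ = B3 1 0 0 0 a⁻¹ 0 0 0 1 := by
  refine inv_eq_right_inv ?_
  simp [B3_mul, mul_nonsing_inv a ha, B3_one]

end BlockMatrix

section Conjugation

variable {R : Type*} [CommRing R] {m : ℕ}

theorem inv_mul_inv_mul_transpose_mul_inv (e η : Matrix (Fin m) (Fin m) R)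
    (ζ : Matrix (Fin 1) (Fin m) R) :
    e⁻¹ * (η⁻¹ * (ζ * e⁻¹)ᵀ) = (eᵀ * η * e)⁻¹ * ζᵀ := by
  rw [Matrix.mul_inv_rev, Matrix.mul_inv_rev, transpose_mul, transpose_nonsing_inv]
  simp only [Matrix.mul_assoc]

variable [Algebra ℝ R]

/-- Since `(ζ e⁻¹)^t = η⁻¹ e⁻ᵀ ζᵀ`, the factor `e⁻¹` coming from `u₀⁻¹` completes `η⁻¹` to
`g⁻¹ = e⁻¹ η⁻¹ e⁻ᵀ`. -/
theorem conj_k1R_eq (e : Matrix (Fin m) (Fin m) R) (he : IsUnit e.det)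
    (ζ : Matrix (Fin 1) (Fin m) R) :
    (B3 1 0 0 0 e 0 0 0 1)⁻¹ * k1R (ζ * e⁻¹) * B3 1 0 0 0 e 0 0 0 1 =
      B3 1 ζ ((2⁻¹ : ℝ) • (ζ * ((eᵀ * MinkR m R * e)⁻¹ * ζᵀ)))
        0 1 ((eᵀ * MinkR m R * e)⁻¹ * ζᵀ) 0 0 1 := by
  have hcol := inv_mul_inv_mul_transpose_mul_inv e (MinkR m R) ζ
  rw [inv_B3_blockDiagonal e he, k1R, rTR, B3_mul, B3_mul]
  simp only [Matrix.mul_zero, Matrix.zero_mul, Matrix.mul_one, Matrix.one_mul, add_zero,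
    zero_add, smul_zero, Matrix.mul_assoc, nonsing_inv_mul e he, Matrix.mul_smul, hcol]

end Conjugation

theorem stmt_11_general (m : ℕ) (R : Type*) [CommRing R] [Algebra ℝ R]
    (e : Matrix (Fin m) (Fin m) R) (he : IsUnit e.det)
    (ζ : Matrix (Fin 1) (Fin m) R) (z zi : R) :
    (B3 1 0 0 0 e 0 0 0 1)⁻¹ * k1R (ζ * e⁻¹) * B3 1 0 0 0 e 0 0 0 1
        * B3 (z • 1) 0 0 0 (z • (1 : Matrix (Fin m) (Fin m) R)) 0 0 0 (zi • 1)
      = B3 (z • 1) (z • ζ)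
          ((2⁻¹ : ℝ) • (zi • (ζ * (e.transpose * MinkR m R * e)⁻¹ * ζ.transpose)))
          0 (z • (1 : Matrix (Fin m) (Fin m) R))
          (zi • ((e.transpose * MinkR m R * e)⁻¹ * ζ.transpose))
          0 0 (zi • 1) := by
  rw [conj_k1R_eq e he, B3_mul]
  simp [Matrix.mul_assoc, smul_comm zi ((2 : ℝ)⁻¹)]

/-- `u₀⁻¹ · k₁(ζe⁻¹) · u₀ · W W̃ = W̄`: the matrix implementing the residual Weyl
transformation on the fully dressed fields, where `u₀ = blockdiag(1, e, 1)`,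
`W W̃ = blockdiag(z, z·1ₘ, z⁻¹)` and `g = eᵀηe`. -/
theorem stmt_11 (m : ℕ) (hm : 0 < m) (R : Type*) [CommRing R] [Algebra ℝ R]
    (e : Matrix (Fin m) (Fin m) R) (he : IsUnit e.det)
    (ζ : Matrix (Fin 1) (Fin m) R) (z zi : R) (hz : z * zi = 1) :
    (B3 1 0 0 0 e 0 0 0 1)⁻¹ * k1R (ζ * e⁻¹) * B3 1 0 0 0 e 0 0 0 1
        * B3 (z • 1) 0 0 0 (z • (1 : Matrix (Fin m) (Fin m) R)) 0 0 0 (zi • 1)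
      = B3 (z • 1) (z • ζ)
          ((2⁻¹ : ℝ) • (zi • (ζ * (e.transpose * MinkR m R * e)⁻¹ * ζ.transpose)))
          0 (z • (1 : Matrix (Fin m) (Fin m) R))
          (zi • ((e.transpose * MinkR m R * e)⁻¹ * ζ.transpose))
          0 0 (zi • 1) :=
  stmt_11_general m R e he ζ z zi
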